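/- In the twisted group algebra A(S_n) = R_n ⋊ ℂ[S_n], for any g₁, g₂ ∈ S_n one has g₁* · g₂* = X(g₁,g₂) · (g₁g₂)*, where X(g₁,g₂) = ∏_{(a,b) ∈ I(g₁⁻¹) \ I((g₁g₂)⁻¹)} X_{ab}·X_{ba}. -/

import Mathlib

/-!
Both sides are multiples of the single permutation `g₁ g₂`, so the claim is the monomial identity
`X_{g₁} · g₁.X_{g₂} = X(g₁,g₂) · X_{g₁g₂}`. The monomial `g₁.X_{g₂}` is the product of `X_{xy}`
over the pairs `(x, y) = (g₁ a, g₁ b)` with `(a, b) ∈ I(g₂⁻¹)`, i.e. over the pairs that `g₁⁻¹`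
keeps in order and `(g₁g₂)⁻¹` reverses. If `x < y` such a pair lies in `I((g₁g₂)⁻¹) \ I(g₁⁻¹)`;
if `y < x` its reversal lies in `I(g₁⁻¹) \ I((g₁g₂)⁻¹)`. Multiplying by `X_{g₁}`, the first kind
enlarges `I(g₁⁻¹)` to `I(g₁⁻¹) ∪ I((g₁g₂)⁻¹)`, whose monomial is `X_{g₁g₂}` times the `X_{ab}` over
`I(g₁⁻¹) \ I((g₁g₂)⁻¹)`, and the second kind supplies the matching factors `X_{ba}`.
-/

open MvPolynomial

/-- The polynomial ring `R_n = ℂ[X_{ab} : 1 ≤ a,b ≤ n]` in `n²` commuting variables. -/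
abbrev R (n : ℕ) : Type := MvPolynomial (Fin n × Fin n) ℂ

/-- The action of `S_n` on `R_n`: `g.X_{ab} = X_{g(a) g(b)}`. -/
noncomputable def permAct {n : ℕ} (g : Equiv.Perm (Fin n)) (p : R n) : R n :=
  MvPolynomial.rename (fun ab => (g ab.1, g ab.2)) p

/-- The twisted group algebra `A(S_n) = R_n ⋊ ℂ[S_n]`, as formal `R_n`-linear
combinations of permutations. -/
abbrev A (n : ℕ) : Type := Equiv.Perm (Fin n) →₀ R n

/-- The identity element `id = 1·id` of `A(S_n)`. -/
noncomputable instance {n : ℕ} : One (A n) := ⟨Finsupp.single 1 1⟩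

/-- The twisted multiplication `(p₁ g₁)·(p₂ g₂) = (p₁ · (g₁.p₂)) g₁g₂` on `A(S_n)`. -/
noncomputable instance {n : ℕ} : Mul (A n) :=
  ⟨fun x y => x.sum fun g₁ p₁ => y.sum fun g₂ p₂ =>
    Finsupp.single (g₁ * g₂) (p₁ * permAct g₁ p₂)⟩

/-- The set of inversions `I(g) = {(a,b) : a < b, g(a) > g(b)}`. -/
def inversions {n : ℕ} (g : Equiv.Perm (Fin n)) : Finset (Fin n × Fin n) :=
  Finset.univ.filter fun ab => ab.1 < ab.2 ∧ g ab.2 < g ab.1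

/-- The monomial `X_g = ∏_{(a,b) ∈ I(g⁻¹)} X_{ab}`. -/
noncomputable def Xg {n : ℕ} (g : Equiv.Perm (Fin n)) : R n :=
  ∏ ab ∈ inversions g⁻¹, MvPolynomial.X ab

/-- The element `g* = X_g · g ∈ A(S_n)`. -/
noncomputable def gstar {n : ℕ} (g : Equiv.Perm (Fin n)) : A n :=
  Finsupp.single g (Xg g)

/-- The cycle `t_{k,j}` sending `m ↦ m+1` for `j ≤ m ≤ k-1` and `k ↦ j`,
fixing all points outside `[j,k]` (meaningful for `j ≤ k`). -/
def cyc {n : ℕ} [NeZero n] (k j : Fin n) : Equiv.Perm (Fin n) :=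
  Equiv.permCongr (Equiv.addLeft j) (Fin.cycleRange (k - j))


theorem Finset.prod_mul_prod_sdiff_eq_prod_sdiff_mul_prod {ι M : Type*} [CommMonoid M]
    [DecidableEq ι] (s t : Finset ι) (f : ι → M) :
    (∏ i ∈ s, f i) * ∏ i ∈ t \ s, f i = (∏ i ∈ s \ t, f i) * ∏ i ∈ t, f i := by
  rw [← Finset.prod_union Finset.disjoint_sdiff, Finset.union_sdiff_self_eq_union,
    ← Finset.prod_union Finset.sdiff_disjoint, Finset.sdiff_union_self_eq_union]

theorem A.single_mul_single {n : ℕ} (g₁ g₂ : Equiv.Perm (Fin n)) (p₁ p₂ : R n) :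
    (Finsupp.single g₁ p₁ * Finsupp.single g₂ p₂ : A n) =
      Finsupp.single (g₁ * g₂) (p₁ * permAct g₁ p₂) := by
  change Finsupp.sum _ _ = _
  rw [Finsupp.sum_single_index (by simp), Finsupp.sum_single_index (by simp [permAct])]

theorem permAct_prod_X {n : ℕ} (g : Equiv.Perm (Fin n)) (s : Finset (Fin n × Fin n)) :
    permAct g (∏ ab ∈ s, X ab) = ∏ ab ∈ s.map (g.prodCongr g).toEmbedding, X ab := by
  simp [permAct, map_prod, rename_X, Finset.prod_map, Prod.map]

@[simp]
theorem mem_inversions {n : ℕ} (g : Equiv.Perm (Fin n)) (ab : Fin n × Fin n) :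
    ab ∈ inversions g ↔ ab.1 < ab.2 ∧ g ab.2 < g ab.1 := by
  simp [inversions]

theorem disjoint_inversions_map_swap {n : ℕ} (g g' : Equiv.Perm (Fin n)) :
    Disjoint (inversions g) ((inversions g').map (Equiv.prodComm _ _).toEmbedding) := by
  rw [Finset.disjoint_left]
  rintro ⟨a, b⟩ hab hba
  simp only [Finset.mem_map_equiv, mem_inversions] at hab hba
  exact lt_asymm hab.1 hba.1

theorem map_prodCongr_inversions_inv {n : ℕ} (g₁ g₂ : Equiv.Perm (Fin n)) :
    (inversions g₂⁻¹).map (g₁.prodCongr g₁).toEmbedding =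
      (inversions (g₁ * g₂)⁻¹ \ inversions g₁⁻¹) ∪
        (inversions g₁⁻¹ \ inversions (g₁ * g₂)⁻¹).map (Equiv.prodComm _ _).toEmbedding := by
  ext ⟨x, y⟩
  have hinj₁ : g₁⁻¹ x = g₁⁻¹ y ↔ x = y := g₁⁻¹.injective.eq_iff
  have hinj₂ : g₂⁻¹ (g₁⁻¹ x) = g₂⁻¹ (g₁⁻¹ y) ↔ x = y := (g₂⁻¹ * g₁⁻¹).injective.eq_iff
  simp only [Finset.mem_map_equiv, Finset.mem_union, Finset.mem_sdiff, Equiv.prodCongr_symm,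
    Equiv.prodComm_symm]
  simp only [Equiv.prodCongr_apply, Equiv.prodComm_apply, Prod.map, Prod.swap, mem_inversions,
    ← Equiv.Perm.inv_def, mul_inv_rev, Equiv.Perm.mul_apply]
  grind

theorem Xg_mul_permAct_Xg {n : ℕ} (g₁ g₂ : Equiv.Perm (Fin n)) :
    Xg g₁ * permAct g₁ (Xg g₂) =
      (∏ ab ∈ inversions g₁⁻¹ \ inversions (g₁ * g₂)⁻¹,
          (X ab * X ab.swap : R n)) * Xg (g₁ * g₂) := by
  set S := inversions g₁⁻¹
  set H := inversions (g₁ * g₂)⁻¹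
  have hdisj : Disjoint (H \ S) ((S \ H).map (Equiv.prodComm _ _).toEmbedding) :=
    (disjoint_inversions_map_swap _ _).mono Finset.sdiff_subset
      (Finset.map_subset_map.2 Finset.sdiff_subset)
  rw [Xg, Xg, Xg, permAct_prod_X, map_prodCongr_inversions_inv, Finset.prod_union hdisj,
    Finset.prod_map, ← mul_assoc, Finset.prod_mul_prod_sdiff_eq_prod_sdiff_mul_prod,
    Finset.prod_mul_distrib, mul_right_comm]
  rfl

/-- `g₁* · g₂* = X(g₁,g₂) · (g₁g₂)*` with
`X(g₁,g₂) = ∏_{(a,b) ∈ I(g₁⁻¹) \ I((g₁g₂)⁻¹)} X_{ab}·X_{ba}`. -/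
theorem gstar_mul {n : ℕ} (g₁ g₂ : Equiv.Perm (Fin n)) :
    gstar g₁ * gstar g₂ =
      (∏ ab ∈ inversions g₁⁻¹ \ inversions (g₁ * g₂)⁻¹,
          (MvPolynomial.X ab * MvPolynomial.X ab.swap : R n)) • gstar (g₁ * g₂) := by
  rw [gstar, gstar, gstar, A.single_mul_single, Finsupp.smul_single, smul_eq_mul,
    Xg_mul_permAct_Xg]
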